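/- arXiv:1405.7507 — 3 statements merged into one kernel-verified Lean document; each statement's English description precedes it below -/
import Mathlib

section
/- Let Δ be a positive integer. Let H be a bipartite graph with parts A and B in which every vertex of B has degree at most Δ. Let G be a bipartite graph with parts A' and B' in which every vertex of A' has degree at least (1 − 1/(2Δ))·|B'|, and suppose |B'| ≥ 2|B|. Then every injection φ: A → A' extends to an injective graph homomorphism from H to G (i.e., there is an injection ψ from A ∪ B to A' ∪ B' with ψ restricted to A equal to φ, mapping A into A' and B into B', such that every edge of H is mapped to an edge of G). -/
/-- Lemma 10 (greedy bipartite embedding): let `H` be a bipartite graph with parts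
`A`, `B` (adjacency relation `H : A → B → Prop`) in which every vertex of `B` has
degree at most `Δ`, and let `G` be a bipartite graph with parts `A'`, `B'` in which
every vertex of `A'` has degree at least `(1 - 1/(2Δ))|B'|`, with `|B'| ≥ 2|B|`.
Then every injection `φ : A → A'` extends to an injective homomorphism from `H`
to `G` (the extension `ψ` maps `B` injectively into `B'`; since the parts are
disjoint, the combined map is injective). -/
theorem greedy_bipartite_embedding (Δ : ℕ) (hΔ : 0 < Δ)
    (A B A' B' : Type) [Fintype A] [Fintype B] [Fintype A'] [Fintype B']
    (H : A → B → Prop) (G : A' → B' → Prop)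
    (hH : ∀ b : B, {a : A | H a b}.ncard ≤ Δ)
    (hG : ∀ a' : A', (1 - 1 / (2 * (Δ : ℝ))) * Fintype.card B' ≤
      ({b' : B' | G a' b'}.ncard : ℝ))
    (hB : 2 * Fintype.card B ≤ Fintype.card B')
    (φ : A → A') (hφ : Function.Injective φ) :
    ∃ ψ : B → B', Function.Injective ψ ∧ ∀ a b, H a b → G (φ a) (ψ b) := by
  classical
  set T : B → Finset B' := fun b =>
    Finset.univ.filter (fun b' => ∀ a, H a b → G (φ a) b') with hT
  have hΔR : (0 : ℝ) < 2 * Δ := by positivity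
  -- for each a', the non-neighborhood is small
  have hnon : ∀ a' : A',
      ((Finset.univ.filter (fun b' => ¬ G a' b')).card : ℝ)
        ≤ (Fintype.card B' : ℝ) / (2 * Δ) := by
    intro a'
    have hc : (Finset.univ.filter (fun b' => G a' b')).card
        + (Finset.univ.filter (fun b' => ¬ G a' b')).card = Fintype.card B' := by
      rw [Finset.card_filter_add_card_filter_not]
      rfl
    have hn : ({b' : B' | G a' b'}.ncard : ℝ)
        = ((Finset.univ.filter (fun b' => G a' b')).card : ℝ) := by
      congr 1
      rw [← Set.ncard_coe_finset]
      congr 1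
      ext x; simp
    have := hG a'
    rw [hn] at this
    have : (Fintype.card B' : ℝ) - (Fintype.card B' : ℝ) / (2 * Δ)
        ≤ ((Finset.univ.filter (fun b' => G a' b')).card : ℝ) := by
      calc (Fintype.card B' : ℝ) - (Fintype.card B' : ℝ) / (2 * Δ)
          = (1 - 1 / (2 * (Δ : ℝ))) * Fintype.card B' := by ring
        _ ≤ _ := this
    have hcR : ((Finset.univ.filter (fun b' => G a' b')).card : ℝ)
        + ((Finset.univ.filter (fun b' => ¬ G a' b')).card : ℝ)
        = (Fintype.card B' : ℝ) := by exact_mod_cast congrArg Nat.cast hc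
    linarith
  -- each T b is large
  have hTcard : ∀ b : B, Fintype.card B ≤ (T b).card := by
    intro b
    have hcompl : (Finset.univ.filter (fun b' => ¬ ∀ a, H a b → G (φ a) b'))
        ⊆ ({a | H a b} : Set A).toFinset.biUnion
          (fun a => Finset.univ.filter (fun b' => ¬ G (φ a) b')) := by
      intro b' hb'
      simp only [Finset.mem_filter, Finset.mem_univ, true_and] at hb'
      push_neg at hb'
      obtain ⟨a, ha, hga⟩ := hb'
      simp only [Finset.mem_biUnion, Set.mem_toFinset, Set.mem_setOf_eq,
        Finset.mem_filter, Finset.mem_univ, true_and]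
      exact ⟨a, ha, hga⟩
    have hsplit : (T b).card
        + (Finset.univ.filter (fun b' => ¬ ∀ a, H a b → G (φ a) b')).card
        = Fintype.card B' := by
      rw [hT]
      rw [Finset.card_filter_add_card_filter_not]
      rfl
    have hcard1 : (({a | H a b} : Set A).toFinset.biUnion
        (fun a => Finset.univ.filter (fun b' => ¬ G (φ a) b'))).card
        ≤ ∑ a ∈ ({a | H a b} : Set A).toFinset,
            (Finset.univ.filter (fun b' => ¬ G (φ a) b')).card :=
      Finset.card_biUnion_le
    have hA : (({a | H a b} : Set A).toFinset.card : ℝ) ≤ (Δ : ℝ) := by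
      have := hH b
      rw [Set.ncard_eq_toFinset_card'] at this
      exact_mod_cast this
    have hsum : (∑ a ∈ ({a | H a b} : Set A).toFinset,
        ((Finset.univ.filter (fun b' => ¬ G (φ a) b')).card : ℝ))
        ≤ (Δ : ℝ) * ((Fintype.card B' : ℝ) / (2 * Δ)) := by
      calc (∑ a ∈ ({a | H a b} : Set A).toFinset,
          ((Finset.univ.filter (fun b' => ¬ G (φ a) b')).card : ℝ))
          ≤ ∑ _a ∈ ({a | H a b} : Set A).toFinset,
              ((Fintype.card B' : ℝ) / (2 * Δ)) :=
            Finset.sum_le_sum (fun a _ => hnon (φ a))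
        _ = (({a | H a b} : Set A).toFinset.card : ℝ)
              * ((Fintype.card B' : ℝ) / (2 * Δ)) := by
            rw [Finset.sum_const, nsmul_eq_mul]
        _ ≤ (Δ : ℝ) * ((Fintype.card B' : ℝ) / (2 * Δ)) := by
            apply mul_le_mul_of_nonneg_right hA
            positivity
    have hcomplR : ((Finset.univ.filter
        (fun b' => ¬ ∀ a, H a b → G (φ a) b')).card : ℝ)
        ≤ (Fintype.card B' : ℝ) / 2 := by
      have h1 : ((Finset.univ.filter (fun b' => ¬ ∀ a, H a b → G (φ a) b')).card : ℝ)
          ≤ (∑ a ∈ ({a | H a b} : Set A).toFinset,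
              ((Finset.univ.filter (fun b' => ¬ G (φ a) b')).card : ℝ)) := by
        push_cast
        exact_mod_cast le_trans (Nat.cast_le.mpr (Finset.card_le_card hcompl))
          (Nat.cast_le.mpr hcard1)
      have h2 : (Δ : ℝ) * ((Fintype.card B' : ℝ) / (2 * Δ)) = (Fintype.card B' : ℝ) / 2 := by
        field_simp
      linarith
    have hsplitR : ((T b).card : ℝ)
        + ((Finset.univ.filter (fun b' => ¬ ∀ a, H a b → G (φ a) b')).card : ℝ)
        = (Fintype.card B' : ℝ) := by exact_mod_cast congrArg Nat.cast hsplit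
    have hBR : 2 * (Fintype.card B : ℝ) ≤ (Fintype.card B' : ℝ) := by exact_mod_cast hB
    have : (Fintype.card B : ℝ) ≤ ((T b).card : ℝ) := by linarith
    exact_mod_cast this
  -- Hall's condition
  have hall : ∀ s : Finset B, s.card ≤ (s.biUnion T).card := by
    intro s
    rcases s.eq_empty_or_nonempty with rfl | ⟨b, hb⟩
    · simp
    · calc s.card ≤ Fintype.card B := Finset.card_le_univ s
        _ ≤ (T b).card := hTcard b
        _ ≤ (s.biUnion T).card :=
            Finset.card_le_card (fun x hx => Finset.mem_biUnion.mpr ⟨b, hb, hx⟩)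
  obtain ⟨ψ, hinj, hmem⟩ := (Finset.all_card_le_biUnion_card_iff_exists_injective T).mp hall
  refine ⟨ψ, hinj, fun a b hab => ?_⟩
  have := hmem b
  rw [hT] at this
  simp only [Finset.mem_filter] at this
  exact this.2 a hab
end

section
/- For each 0 < ε < 1/2 and each positive integer k, any graph G = (V, E) on at least k vertices contains an ε-regular k-cylinder V_1 × ... × V_k with parts of equal size, where the size of each part is at least (1/(2k))·ε^{k^2·ε^{−5}}·|V|. -/
/-!
Energy increment on a single cylinder. The potential `cylinderDefect` of a cylinder is the sum of `d (1 - d)` over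
its pairs of parts. If some pair is not `ε`-regular, split every part into `D ≈ 8 / ε` blocks of
equal size, chosen so that witnesses of the irregularity (shrunk to whole numbers of blocks, which
keeps their density deviation) are unions of blocks. Over the `D ^ k` sub-cylinders, densities
average to the old ones while, by convexity, squared densities gain at least `49/64 ε⁴` on the
irregular pair; so some sub-cylinder has potential smaller by `49/64 ε⁴`. The potential lies in
`[0, k² / 4]`, so starting from `k` disjoint sets of size `q D ^ T` with `T ≈ k² ε⁻⁴ / 3` we reach a
regular cylinder with parts of size `q` within `T` steps, and `D ^ T ≤ ε ^ (-k² ε⁻⁵)` makes `q` large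
enough. When the required size is at most `1`, singletons do.
-/

/-- The density of the pair of vertex sets `(A, B)` in the graph `G`:
`d(A,B) = e(A,B) / (|A| |B|)`. -/
noncomputable def density {V : Type*} (G : SimpleGraph V) (A B : Finset V) : ℝ :=
  ({p : V × V | p.1 ∈ A ∧ p.2 ∈ B ∧ G.Adj p.1 p.2}.ncard : ℝ) / ((A.card : ℝ) * (B.card : ℝ))

/-- The pair `(A, B)` is `ε`-regular in `G`: for all `X ⊆ A`, `Y ⊆ B` with
`|X| > ε|A|` and `|Y| > ε|B|`, one has `|d(X,Y) - d(A,B)| < ε`. -/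
def EpsRegular {V : Type*} (G : SimpleGraph V) (ε : ℝ) (A B : Finset V) : Prop :=
  ∀ X ⊆ A, ∀ Y ⊆ B, ε * (A.card : ℝ) < (X.card : ℝ) → ε * (B.card : ℝ) < (Y.card : ℝ) →
    |density G X Y - density G A B| < ε

/-- The number of neighbors of the vertex `a` inside the set `B`. -/
noncomputable def degIn {V : Type*} (G : SimpleGraph V) (a : V) (B : Finset V) : ℕ :=
  {b : V | b ∈ B ∧ G.Adj a b}.ncard

/-- The pair `(A, B)` is `(ε, d, δ)`-super-regular in `G`: it is `ε`-regular, has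
density at least `d`, every vertex of `A` has at least `δ|B|` neighbors in `B`, and
every vertex of `B` has at least `δ|A|` neighbors in `A`. -/
def SuperRegular {V : Type*} (G : SimpleGraph V) (ε d δ : ℝ) (A B : Finset V) : Prop :=
  EpsRegular G ε A B ∧ d ≤ density G A B ∧
    (∀ a ∈ A, δ * (B.card : ℝ) ≤ (degIn G a B : ℝ)) ∧
    (∀ b ∈ B, δ * (A.card : ℝ) ≤ (degIn G b A : ℝ))

open Finset

lemma sub_one_lt_natCast_div {r : ℝ} {n u : ℕ} (hu : 0 < u) (h : r * u ≤ n) :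
    r - 1 < (n / u : ℕ) := by
  rw [← Nat.floor_div_eq_div (K := ℝ)]
  have : r ≤ n / u := (le_div_iff₀ (Nat.cast_pos.mpr hu)).2 h
  linarith [Nat.sub_one_lt_floor ((n : ℝ) / u)]

lemma le_natCast_div_of_two_mul_le {β : ℝ} (hβ : 1 ≤ β) {n m : ℕ} (hm : 0 < m)
    (h : 2 * β * m ≤ n) : β ≤ (n / m : ℕ) := by
  linarith [sub_one_lt_natCast_div hm h]

lemma exists_pairwise_disjoint_card_eq {ι V : Type*} [Fintype ι] [Fintype V] {s : ℕ}
    (h : Fintype.card ι * s ≤ Fintype.card V) :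
    ∃ W : ι → Finset V, (∀ i j, i ≠ j → Disjoint (W i) (W j)) ∧ ∀ i, #(W i) = s := by
  obtain ⟨f⟩ := Function.Embedding.nonempty_of_card_le (α := ι × Fin s) (β := V) (by simpa)
  refine ⟨fun i ↦ univ.map ((Function.Embedding.sectR i _).trans f), fun i j hij ↦ ?_,
    fun i ↦ by simp⟩
  simp only [disjoint_left, mem_map, mem_univ, true_and, not_exists]
  rintro _ ⟨a, rfl⟩ b hb
  exact hij (congrArg Prod.fst (f.injective hb)).symm

section Averaging

variable {α : Type*} [DecidableEq α] (w : α → ℝ)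

lemma sum_div_card_le_sum_erase_div_card {X : Finset α} {v : α} (hv : v ∈ X)
    (hmin : ∀ x ∈ X, w v ≤ w x) (hX : 2 ≤ #X) :
    (∑ x ∈ X, w x) / #X ≤ (∑ x ∈ X.erase v, w x) / #(X.erase v) := by
  have hcard : (#(X.erase v) : ℝ) = #X - 1 := by
    rw [card_erase_of_mem hv, Nat.cast_sub (by omega), Nat.cast_one]
  have hmul : #X * w v ≤ ∑ x ∈ X, w x := by
    simpa [nsmul_eq_mul] using card_nsmul_le_sum X w (w v) hmin
  have hX' : (2 : ℝ) ≤ #X := by exact_mod_cast hX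
  rw [← add_sum_erase X w hv] at hmul ⊢
  rw [hcard, div_le_div_iff₀ (by linarith) (by linarith)]
  nlinarith

lemma exists_subset_card_eq_sum_div_le {z : ℕ} (hz : 0 < z) {X : Finset α} (hzX : z ≤ #X) :
    ∃ S ⊆ X, #S = z ∧ (∑ x ∈ X, w x) / #X ≤ (∑ x ∈ S, w x) / #S := by
  obtain ⟨d, hd⟩ := Nat.exists_eq_add_of_le hzX
  induction d generalizing X with
  | zero => exact ⟨X, subset_rfl, hd, le_rfl⟩
  | succ d ih =>
    obtain ⟨v, hv, hmin⟩ := X.exists_min_image w (card_pos.mp (by omega))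
    obtain ⟨S, hS, hSz, hSavg⟩ := ih (X := X.erase v) (by rw [card_erase_of_mem hv]; omega)
      (by rw [card_erase_of_mem hv]; omega)
    exact ⟨S, hS.trans (erase_subset v X), hSz,
      (sum_div_card_le_sum_erase_div_card w hv hmin (by omega)).trans hSavg⟩

lemma exists_subset_card_eq_le_sum_div {z : ℕ} (hz : 0 < z) {X : Finset α} (hzX : z ≤ #X) :
    ∃ S ⊆ X, #S = z ∧ (∑ x ∈ S, w x) / #S ≤ (∑ x ∈ X, w x) / #X := by
  obtain ⟨S, hS, hSz, h⟩ := exists_subset_card_eq_sum_div_le (-w) hz hzX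
  simp only [Pi.neg_apply, sum_neg_distrib, neg_div, neg_le_neg_iff] at h
  exact ⟨S, hS, hSz, h⟩

end Averaging

namespace Finpartition

variable {α : Type*} [DecidableEq α] {s t : Finset α} {u : ℕ}

lemma card_eq_card_parts_mul (P : Finpartition s) (hP : ∀ x ∈ P.parts, #x = u) :
    #s = #P.parts * u := by
  rw [← P.sum_card_parts, sum_const_nat hP]

lemma card_parts_eq_of_card_eq {P : Finpartition s} (hP : ∀ x ∈ P.parts, #x = u) (hu : 0 < u)
    {n : ℕ} (hs : #s = n * u) : #P.parts = n :=
  Nat.eq_of_mul_eq_mul_right hu ((P.card_eq_card_parts_mul hP).symm.trans hs)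

lemma exists_forall_card_eq (hs : u ∣ #s) : ∃ P : Finpartition s, ∀ x ∈ P.parts, #x = u := by
  obtain ⟨a, ha⟩ := hs
  have h : a * u + 0 * (u + 1) = #s := by rw [zero_mul, add_zero, ha, mul_comm]
  -- equitabilising any partition into `a` parts of size `u` and none of size `u + 1`
  refine ⟨(⊥ : Finpartition s).equitabilise h, fun x hx ↦ ?_⟩
  refine (card_eq_of_mem_parts_equitabilise hx).resolve_right fun hx' ↦ ?_
  have := (⊥ : Finpartition s).card_filter_equitabilise_big h
  rw [card_eq_zero, filter_eq_empty_iff] at this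
  exact this hx hx'

lemma exists_forall_card_eq_of_subset (hts : t ⊆ s) (ht : u ∣ #t) (hs : u ∣ #s) :
    ∃ P : Finpartition s, (∀ x ∈ P.parts, #x = u) ∧ ∃ Q : Finpartition t, Q.parts ⊆ P.parts := by
  obtain ⟨Q, hQ⟩ := exists_forall_card_eq ht
  obtain ⟨R, hR⟩ := exists_forall_card_eq (s := s \ t) (u := u)
    (by rw [card_sdiff_of_subset hts]; exact Nat.dvd_sub hs ht)
  have hdisj : ((Q.parts ∪ R.parts : Finset (Finset α)) : Set (Finset α)).PairwiseDisjoint id := by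
    rw [coe_union]
    refine Q.disjoint.union R.disjoint fun x hx y hy _ ↦ ?_
    exact disjoint_sdiff.mono (Q.le hx) (R.le hy)
  have hsup : (Q.parts ∪ R.parts).sup id = s := by
    rw [sup_union, Q.sup_parts, R.sup_parts]
    exact union_sdiff_of_subset hts
  refine ⟨(ofPairwiseDisjoint _ hdisj).copy hsup, fun x hx ↦ ?_, Q, fun x hx ↦ ?_⟩
  · simp only [copy, ofPairwiseDisjoint_parts, mem_erase, mem_union] at hx
    exact hx.2.elim (hQ x) (hR x)
  · simp only [copy, ofPairwiseDisjoint_parts, mem_erase, mem_union]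
    exact ⟨Q.ne_bot hx, Or.inl hx⟩

end Finpartition

namespace Fintype

variable {ι α : Type*} [Fintype ι] [DecidableEq ι] [DecidableEq α] (s : ι → Finset α) {D : ℕ}
  {i j : ι}

lemma card_filter_piFinset_apply_eq_apply_eq (hs : ∀ i, #(s i) = D) (hij : i ≠ j) {a b : α}
    (ha : a ∈ s i) (hb : b ∈ s j) :
    #{c ∈ piFinset s | c i = a ∧ c j = b} = D ^ (card ι - 2) := by
  have hfilter : {c ∈ piFinset s | c i = a ∧ c j = b} =
      {c ∈ piFinset (Function.update s i {a}) | c j = b} := by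
    rw [piFinset_update_singleton_eq_filter_piFinset_eq _ _ ha, filter_filter]
  have hi : i ∈ univ.erase j := mem_erase.2 ⟨hij, mem_univ i⟩
  rw [hfilter, card_filter_piFinset_eq_of_mem (Function.update s i {a}) j (a := b)
    (by rwa [Function.update_of_ne hij.symm])]
  calc ∏ l ∈ univ.erase j, #(Function.update s i {a} l)
      = ∏ l ∈ univ.erase j, Function.update (fun _ ↦ D) i 1 l := by
        refine Finset.prod_congr rfl fun l _ ↦ ?_
        rcases eq_or_ne l i with rfl | hl
        · simp
        · simp [Function.update_of_ne hl, hs]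
    _ = D ^ (card ι - 2) := by
        rw [prod_update_of_mem hi, prod_const, one_mul, card_sdiff_of_subset (by simpa using hi),
          card_erase_of_mem (mem_univ j), card_univ, card_singleton, Nat.sub_sub]

lemma sum_piFinset_apply_apply {M : Type*} [AddCommMonoid M] (hs : ∀ i, #(s i) = D) (hij : i ≠ j)
    (f : α → α → M) :
    ∑ c ∈ piFinset s, f (c i) (c j) = D ^ (card ι - 2) • ∑ a ∈ s i, ∑ b ∈ s j, f a b := by
  rw [← sum_fiberwise_of_maps_to (g := fun c ↦ (c i, c j)) (t := s i ×ˢ s j)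
    (fun c hc ↦ mem_product.2 ⟨mem_piFinset.1 hc i, mem_piFinset.1 hc j⟩), sum_product, smul_sum]
  refine Finset.sum_congr rfl fun a ha ↦ ?_
  rw [smul_sum]
  refine Finset.sum_congr rfl fun b hb ↦ ?_
  simp only [Prod.mk.injEq]
  rw [← card_filter_piFinset_apply_eq_apply_eq s hs hij ha hb, ← sum_const]
  exact Finset.sum_congr rfl fun c hc ↦ by rw [(mem_filter.1 hc).2.1, (mem_filter.1 hc).2.2]

end Fintype

section Density

variable {V : Type*} (G : SimpleGraph V)

lemma density_eq_edgeDensity [DecidableRel G.Adj] (A B : Finset V) :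
    density G A B = G.edgeDensity A B := by
  have h : {p : V × V | p.1 ∈ A ∧ p.2 ∈ B ∧ G.Adj p.1 p.2} = ↑(G.interedges A B) := by
    ext; simp [SimpleGraph.mem_interedges_iff]
  rw [density, h, Set.ncard_coe_finset, ← G.card_interedges_div_card]
  push_cast; rfl

lemma density_eq_card_interedges_div [DecidableRel G.Adj] (A B : Finset V) :
    density G A B = #(G.interedges A B) / (#A * #B) := by
  rw [density_eq_edgeDensity, ← G.card_interedges_div_card]
  push_cast; rfl

lemma density_comm (A B : Finset V) : density G A B = density G B A := by
  classical
  simp only [density_eq_edgeDensity, G.edgeDensity_comm]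

lemma density_nonneg (A B : Finset V) : 0 ≤ density G A B := by
  classical
  rw [density_eq_edgeDensity]
  exact_mod_cast G.edgeDensity_nonneg A B

lemma density_le_one (A B : Finset V) : density G A B ≤ 1 := by
  classical
  rw [density_eq_edgeDensity]
  exact_mod_cast G.edgeDensity_le_one A B

lemma card_interedges_eq_sum [DecidableRel G.Adj] (A B : Finset V) :
    #(G.interedges A B) = ∑ a ∈ A, #{b ∈ B | G.Adj a b} := by
  simp only [SimpleGraph.interedges_def, card_filter, sum_product]

lemma density_eq_sum_div [DecidableRel G.Adj] (A B : Finset V) :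
    density G A B = (∑ a ∈ A, (#{b ∈ B | G.Adj a b} : ℝ)) / #A / #B := by
  rw [density_eq_card_interedges_div, card_interedges_eq_sum, div_div]
  push_cast; rfl

end Density

lemma epsRegular_of_card_le_one {V : Type*} (G : SimpleGraph V) {ε : ℝ} (hε : 0 < ε)
    {A B : Finset V} (hA : #A ≤ 1) (hB : #B ≤ 1) : EpsRegular G ε A B := by
  have eq_of_lt : ∀ {Z C : Finset V}, Z ⊆ C → #C ≤ 1 → ε * #C < #Z → Z = C :=
    fun hZ hC h ↦ eq_of_subset_of_card_le hZ <| hC.trans <| Nat.cast_pos.1 <|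
      (mul_nonneg hε.le (Nat.cast_nonneg _)).trans_lt h
  intro X hX Y hY hXc hYc
  rwa [eq_of_lt hX hA hXc, eq_of_lt hY hB hYc, sub_self, abs_zero]

section Witness

variable {V : Type*} (G : SimpleGraph V)

lemma exists_subset_card_eq_le_density {z : ℕ} (hz : 0 < z) {X : Finset V} (hzX : z ≤ #X)
    (Y : Finset V) : ∃ S ⊆ X, #S = z ∧ density G X Y ≤ density G S Y := by
  classical
  obtain ⟨S, hS, hSz, h⟩ := exists_subset_card_eq_sum_div_le
    (fun a ↦ (#{b ∈ Y | G.Adj a b} : ℝ)) hz hzX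
  refine ⟨S, hS, hSz, ?_⟩
  rw [density_eq_sum_div, density_eq_sum_div]
  gcongr

lemma exists_subset_card_eq_density_le {z : ℕ} (hz : 0 < z) {X : Finset V} (hzX : z ≤ #X)
    (Y : Finset V) : ∃ S ⊆ X, #S = z ∧ density G S Y ≤ density G X Y := by
  classical
  obtain ⟨S, hS, hSz, h⟩ := exists_subset_card_eq_le_sum_div
    (fun a ↦ (#{b ∈ Y | G.Adj a b} : ℝ)) hz hzX
  refine ⟨S, hS, hSz, ?_⟩
  rw [density_eq_sum_div, density_eq_sum_div]
  gcongr

lemma exists_subsets_card_eq_abs_density_sub_le (c : ℝ) {z₁ z₂ : ℕ} (hz₁ : 0 < z₁)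
    (hz₂ : 0 < z₂) {X Y : Finset V} (hX : z₁ ≤ #X) (hY : z₂ ≤ #Y) :
    ∃ X₀ ⊆ X, ∃ Y₀ ⊆ Y, #X₀ = z₁ ∧ #Y₀ = z₂ ∧
      |density G X Y - c| ≤ |density G X₀ Y₀ - c| := by
  rcases le_total c (density G X Y) with hc | hc
  · obtain ⟨X₀, hX₀, hX₀z, h₁⟩ := exists_subset_card_eq_le_density G hz₁ hX Y
    obtain ⟨Y₀, hY₀, hY₀z, h₂⟩ := exists_subset_card_eq_le_density G hz₂ hY X₀
    refine ⟨X₀, hX₀, Y₀, hY₀, hX₀z, hY₀z, ?_⟩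
    rw [density_comm G Y, density_comm G Y₀] at h₂
    rw [abs_of_nonneg (by linarith), abs_of_nonneg (by linarith)]
    linarith
  · obtain ⟨X₀, hX₀, hX₀z, h₁⟩ := exists_subset_card_eq_density_le G hz₁ hX Y
    obtain ⟨Y₀, hY₀, hY₀z, h₂⟩ := exists_subset_card_eq_density_le G hz₂ hY X₀
    refine ⟨X₀, hX₀, Y₀, hY₀, hX₀z, hY₀z, ?_⟩
    rw [density_comm G Y, density_comm G Y₀] at h₂
    rw [abs_of_nonpos (by linarith), abs_of_nonpos (by linarith)]
    linarith

lemma exists_blockAligned_witness_of_not_epsRegular {ε : ℝ} {D u : ℕ} (hu : 0 < u)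
    (hD : 8 ≤ ε * D) {A B : Finset V} (hA : #A = D * u) (hB : #B = D * u)
    (h : ¬EpsRegular G ε A B) :
    ∃ X ⊆ A, ∃ Y ⊆ B, ∃ a b : ℕ, #X = a * u ∧ #Y = b * u ∧
      7 / 8 * (ε * D) ≤ a ∧ 7 / 8 * (ε * D) ≤ b ∧ ε ≤ |density G X Y - density G A B| := by
  simp only [EpsRegular, not_forall, not_lt, exists_prop] at h
  obtain ⟨X, hXA, Y, hYB, hX, hY, hXY⟩ := h
  have le_div : ∀ {Z : Finset V}, ε * (D * u : ℕ) < #Z → 7 / 8 * (ε * D) ≤ (#Z / u : ℕ) := by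
    intro Z hZ
    have := sub_one_lt_natCast_div (r := ε * D) hu (by push_cast at hZ; linarith)
    linarith
  have hXa := le_div (hA ▸ hX)
  have hYb := le_div (hB ▸ hY)
  have pos : ∀ {Z : Finset V}, 7 / 8 * (ε * D) ≤ (#Z / u : ℕ) → 0 < #Z / u * u := by
    intro Z hZ
    exact Nat.mul_pos (Nat.cast_pos.mp (by linarith : (0 : ℝ) < (#Z / u : ℕ))) hu
  obtain ⟨X₀, hX₀, Y₀, hY₀, hX₀c, hY₀c, hdev⟩ := exists_subsets_card_eq_abs_density_sub_le G
    (density G A B) (pos hXa) (pos hYb) (Nat.div_mul_le_self _ _) (Nat.div_mul_le_self _ _)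
  exact ⟨X₀, hX₀.trans hXA, Y₀, hY₀.trans hYB, _, _, hX₀c, hY₀c, hXa, hYb, hXY.trans hdev⟩

end Witness

section Energy

variable {V : Type*} [DecidableEq V] (G : SimpleGraph V) {A B X Y : Finset V} {u v : ℕ}
  (P : Finpartition A) (Q : Finpartition B)

lemma sum_density_div_card_eq (hP : ∀ p ∈ P.parts, #p = u) (hQ : ∀ q ∈ Q.parts, #q = v) :
    (∑ pq ∈ P.parts ×ˢ Q.parts, density G pq.1 pq.2) / #(P.parts ×ˢ Q.parts) =
      density G A B := by
  classical
  have hsum : ∑ pq ∈ P.parts ×ˢ Q.parts, density G pq.1 pq.2 =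
      #(G.interedges A B) / (u * v) := by
    rw [SimpleGraph.interedges, Rel.card_interedges_finpartition G.Adj P Q, Nat.cast_sum,
      sum_div]
    refine sum_congr rfl fun pq hpq ↦ ?_
    rw [mem_product] at hpq
    rw [density_eq_card_interedges_div, hP _ hpq.1, hQ _ hpq.2]
    rfl
  rw [hsum, density_eq_card_interedges_div, P.card_eq_card_parts_mul hP,
    Q.card_eq_card_parts_mul hQ, card_product, div_div]
  push_cast
  ring_nf

lemma sum_density_mul_one_sub_le (hP : ∀ p ∈ P.parts, #p = u) (hQ : ∀ q ∈ Q.parts, #q = v)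
    (P₀ : Finpartition X) (Q₀ : Finpartition Y) (hP₀ : P₀.parts ⊆ P.parts)
    (hQ₀ : Q₀.parts ⊆ Q.parts) :
    ∑ pq ∈ P.parts ×ˢ Q.parts, density G pq.1 pq.2 * (1 - density G pq.1 pq.2) ≤
      #P.parts * #Q.parts * (density G A B * (1 - density G A B)) -
        #P₀.parts * #Q₀.parts * (density G X Y - density G A B) ^ 2 := by
  have hst : P₀.parts ×ˢ Q₀.parts ⊆ P.parts ×ˢ Q.parts := product_subset_product hP₀ hQ₀
  have hs := sum_density_div_card_eq G P₀ Q₀ (fun p hp ↦ hP p (hP₀ hp)) fun q hq ↦ hQ q (hQ₀ hq)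
  have ht := sum_density_div_card_eq G P Q hP hQ
  rw [← Nat.cast_mul, ← Nat.cast_mul, ← card_product, ← card_product]
  rcases eq_or_ne #(P.parts ×ˢ Q.parts) 0 with ht0 | ht0
  · have hs0 := Nat.le_zero.mp (ht0 ▸ card_le_card hst)
    rw [card_eq_zero.mp ht0, card_eq_zero.mp hs0]
    simp
  have htpos : (0 : ℝ) < #(P.parts ×ˢ Q.parts) := by positivity
  have key := SzemerediRegularity.add_div_le_sum_sq_div_card hst
    (fun pq ↦ density G pq.1 pq.2) (density G A B ^ 2) (abs_nonneg _)
    (by rw [hs, ht]) (by rw [ht])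
  rw [le_div_iff₀ htpos, add_mul, sq_abs, mul_right_comm _ _ (#(P.parts ×ˢ Q.parts) : ℝ),
    div_mul_cancel₀ _ htpos.ne'] at key
  rw [div_eq_iff htpos.ne'] at ht
  simp only [mul_one_sub, sum_sub_distrib, ← sq, ht]
  linarith

end Energy

section Cylinder

variable {ι V : Type*} [Fintype ι] [LinearOrder ι] (G : SimpleGraph V)

def EpsRegularCylinder (ε : ℝ) (l : ι → Finset V) : Prop :=
  ∀ i j, i < j → EpsRegular G ε (l i) (l j)

noncomputable def cylinderDefect (l : ι → Finset V) : ℝ :=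
  ∑ ij ∈ ({ij | ij.1 < ij.2} : Finset (ι × ι)),
    density G (l ij.1) (l ij.2) * (1 - density G (l ij.1) (l ij.2))

lemma cylinderDefect_nonneg (l : ι → Finset V) : 0 ≤ cylinderDefect G l :=
  sum_nonneg fun _ _ ↦ mul_nonneg (density_nonneg G _ _) (sub_nonneg.2 (density_le_one G _ _))

lemma cylinderDefect_le (l : ι → Finset V) : cylinderDefect G l ≤ Fintype.card ι ^ 2 / 4 := by
  calc cylinderDefect G l ≤ ∑ _ij ∈ ({ij | ij.1 < ij.2} : Finset (ι × ι)), (1 / 4 : ℝ) :=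
        sum_le_sum fun ij _ ↦ by nlinarith [sq_nonneg (density G (l ij.1) (l ij.2) - 1 / 2)]
    _ ≤ ∑ _ij : ι × ι, (1 / 4 : ℝ) := sum_le_sum_of_subset_of_nonneg (subset_univ _) (by simp)
    _ = Fintype.card ι ^ 2 / 4 := by
        rw [sum_const, card_univ, Fintype.card_prod, nsmul_eq_mul]
        push_cast; ring

lemma sum_cylinderDefect_piFinset_le [DecidableEq V] {l S : ι → Finset V} {D u : ℕ}
    (P : ∀ i, Finpartition (l i)) (hPu : ∀ i, ∀ p ∈ (P i).parts, #p = u)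
    (hPD : ∀ i, #(P i).parts = D) (P₀ : ∀ i, Finpartition (S i))
    (hP₀ : ∀ i, (P₀ i).parts ⊆ (P i).parts) :
    ∑ c ∈ Fintype.piFinset fun i ↦ (P i).parts, cylinderDefect G c ≤
      D ^ Fintype.card ι * cylinderDefect G l - D ^ (Fintype.card ι - 2) *
        ∑ ij ∈ ({ij | ij.1 < ij.2} : Finset (ι × ι)), #(P₀ ij.1).parts * #(P₀ ij.2).parts *
          (density G (S ij.1) (S ij.2) - density G (l ij.1) (l ij.2)) ^ 2 := by
  unfold cylinderDefect
  rw [sum_comm, mul_sum, mul_sum, ← sum_sub_distrib]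
  refine sum_le_sum fun ij hij ↦ ?_
  have hlt : ij.1 < ij.2 := (mem_filter.1 hij).2
  have hcard : 2 ≤ Fintype.card ι := (card_pair hlt.ne).symm.le.trans (card_le_univ _)
  rw [Fintype.sum_piFinset_apply_apply _ hPD hlt.ne
    (fun p q ↦ density G p q * (1 - density G p q)), nsmul_eq_mul, ← sum_product',
    show Fintype.card ι = Fintype.card ι - 2 + 2 by omega, pow_add, Nat.add_sub_cancel]
  have := sum_density_mul_one_sub_le G (P ij.1) (P ij.2) (hPu ij.1) (hPu ij.2) (P₀ ij.1)
    (P₀ ij.2) (hP₀ ij.1) (hP₀ ij.2)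
  rw [hPD, hPD] at this
  push_cast
  nlinarith [pow_nonneg (Nat.cast_nonneg D : (0 : ℝ) ≤ D) (Fintype.card ι - 2)]

lemma exists_blockRefinement_of_not_epsRegularCylinder [DecidableEq V] {ε : ℝ} {D u : ℕ}
    (hu : 0 < u) (hD : 8 ≤ ε * D) {l : ι → Finset V} (hl : ∀ i, #(l i) = D * u)
    (hirr : ¬EpsRegularCylinder G ε l) :
    ∃ (S : ι → Finset V) (P : ∀ i, Finpartition (l i)) (P₀ : ∀ i, Finpartition (S i)),
      (∀ i, ∀ p ∈ (P i).parts, #p = u) ∧ (∀ i, (P₀ i).parts ⊆ (P i).parts) ∧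
      (D : ℝ) ^ 2 * (49 / 64 * ε ^ 4) ≤
        ∑ ij ∈ ({ij | ij.1 < ij.2} : Finset (ι × ι)), #(P₀ ij.1).parts * #(P₀ ij.2).parts *
          (density G (S ij.1) (S ij.2) - density G (l ij.1) (l ij.2)) ^ 2 := by
  simp only [EpsRegularCylinder, not_forall, exists_prop] at hirr
  obtain ⟨i₀, j₀, hij, hirr⟩ := hirr
  obtain ⟨X, hX, Y, hY, a, b, hXa, hYb, ha, hb, hdev⟩ :=
    exists_blockAligned_witness_of_not_epsRegular G hu hD (hl i₀) (hl j₀) hirr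
  set S := Function.update (Function.update l i₀ X) j₀ Y
  have hSi₀ : S i₀ = X := by simp [S, Function.update_of_ne hij.ne]
  have hSj₀ : S j₀ = Y := by simp [S]
  have hS : ∀ i, S i ⊆ l i ∧ u ∣ #(S i) := by
    intro i
    rcases eq_or_ne i j₀ with rfl | hj
    · exact ⟨hSj₀ ▸ hY, hSj₀ ▸ hYb ▸ dvd_mul_left u b⟩
    rcases eq_or_ne i i₀ with rfl | hi
    · exact ⟨hSi₀ ▸ hX, hSi₀ ▸ hXa ▸ dvd_mul_left u a⟩
    simp only [S, Function.update_of_ne hj, Function.update_of_ne hi]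
    exact ⟨subset_rfl, hl i ▸ dvd_mul_left u D⟩
  choose P hPu P₀ hP₀ using fun i ↦
    Finpartition.exists_forall_card_eq_of_subset (hS i).1 (hS i).2 (hl i ▸ dvd_mul_left u D)
  refine ⟨S, P, P₀, hPu, hP₀, le_trans ?_ (single_le_sum (fun _ _ ↦ by positivity)
    (mem_filter.2 ⟨mem_univ (i₀, j₀), hij⟩))⟩
  have hPa := Finpartition.card_parts_eq_of_card_eq (fun p hp ↦ hPu i₀ p (hP₀ i₀ hp)) hu
    (hSi₀ ▸ hXa)
  have hPb := Finpartition.card_parts_eq_of_card_eq (fun p hp ↦ hPu j₀ p (hP₀ j₀ hp)) hu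
    (hSj₀ ▸ hYb)
  have hε : ε ^ 2 ≤ (density G X Y - density G (l i₀) (l j₀)) ^ 2 := by
    simpa only [sq_abs] using pow_le_pow_left₀ (by nlinarith) hdev 2
  dsimp only
  rw [hPa, hPb, hSi₀, hSj₀]
  calc (D : ℝ) ^ 2 * (49 / 64 * ε ^ 4) = (7 / 8 * (ε * D)) * (7 / 8 * (ε * D)) * ε ^ 2 := by
        ring
    _ ≤ a * b * (density G X Y - density G (l i₀) (l j₀)) ^ 2 := by gcongr

lemma exists_subcylinder_cylinderDefect_le {ε : ℝ} {D u : ℕ} (hu : 0 < u) (hD : 8 ≤ ε * D)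
    {l : ι → Finset V} (hl : ∀ i, #(l i) = D * u) (hirr : ¬EpsRegularCylinder G ε l) :
    ∃ c : ι → Finset V, (∀ i, c i ⊆ l i ∧ #(c i) = u) ∧
      cylinderDefect G c ≤ cylinderDefect G l - 49 / 64 * ε ^ 4 := by
  classical
  have hcard : 2 ≤ Fintype.card ι := by
    simp only [EpsRegularCylinder, not_forall] at hirr
    obtain ⟨i, j, hij, -⟩ := hirr
    exact (card_pair hij.ne).symm.le.trans (card_le_univ _)
  have hD0 : 0 < D := Nat.pos_of_ne_zero fun h ↦ by simp [h] at hD; linarith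
  obtain ⟨S, P, P₀, hPu, hP₀, hgain⟩ :=
    exists_blockRefinement_of_not_epsRegularCylinder G hu hD hl hirr
  have hPD i : #(P i).parts = D := Finpartition.card_parts_eq_of_card_eq (hPu i) hu (hl i)
  have hsum : ∑ c ∈ Fintype.piFinset fun i ↦ (P i).parts, cylinderDefect G c ≤
      ∑ _c ∈ Fintype.piFinset fun i ↦ (P i).parts, (cylinderDefect G l - 49 / 64 * ε ^ 4) := by
    rw [sum_const, Fintype.card_piFinset, prod_congr rfl fun i _ ↦ hPD i, prod_const, card_univ,
      nsmul_eq_mul, Nat.cast_pow]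
    refine (sum_cylinderDefect_piFinset_le G P hPu hPD P₀ hP₀).trans ?_
    rw [show Fintype.card ι = Fintype.card ι - 2 + 2 by omega, pow_add, Nat.add_sub_cancel]
    nlinarith [pow_pos (Nat.cast_pos.2 hD0 : (0 : ℝ) < D) (Fintype.card ι - 2)]
  obtain ⟨c, hc, hdc⟩ := exists_le_of_sum_le
    (Fintype.piFinset_nonempty.2 fun i ↦ card_pos.1 (hPD i ▸ hD0)) hsum
  refine ⟨c, fun i ↦ ?_, hdc⟩
  have := Fintype.mem_piFinset.1 hc i
  exact ⟨(P i).le this, hPu i _ this⟩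

lemma exists_epsRegularCylinder_subcylinder {ε : ℝ} {D q : ℕ} (hq : 0 < q) (hD : 8 ≤ ε * D)
    (t : ℕ) {l : ι → Finset V} (hl : ∀ i, #(l i) = q * D ^ t)
    (hdef : cylinderDefect G l < t * (49 / 64 * ε ^ 4)) :
    ∃ c : ι → Finset V, (∀ i, c i ⊆ l i) ∧ (∃ s, q ≤ s ∧ ∀ i, #(c i) = s) ∧
      EpsRegularCylinder G ε c := by
  have hD0 : 0 < D := Nat.pos_of_ne_zero fun h ↦ by simp [h] at hD; linarith
  induction t generalizing l with
  | zero => simpa using (cylinderDefect_nonneg G l).trans_lt hdef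
  | succ t ih =>
    by_cases hreg : EpsRegularCylinder G ε l
    · exact ⟨l, fun _ ↦ subset_rfl, ⟨_, Nat.le_mul_of_pos_right q (by positivity), hl⟩, hreg⟩
    obtain ⟨c, hc, hdc⟩ := exists_subcylinder_cylinderDefect_le G (u := q * D ^ t)
      (by positivity) hD (fun i ↦ by rw [hl i]; ring) hreg
    obtain ⟨c', hc', hs, hreg'⟩ := ih (fun i ↦ (hc i).2) (by push_cast at hdef; linarith)
    exact ⟨c', fun i ↦ (hc' i).trans (hc i).1, hs, hreg'⟩

end Cylinder

lemma exists_refinement_parameters {ε : ℝ} (hε0 : 0 < ε) (hε : ε < 1 / 2) {k : ℕ}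
    (hk : 0 < k) : ∃ D T : ℕ, 8 ≤ ε * D ∧ (k : ℝ) ^ 2 / 4 < T * (49 / 64 * ε ^ 4) ∧
      (D : ℝ) ^ T * ε ^ ((k : ℝ) ^ 2 * ε ^ (-5 : ℝ)) ≤ 1 := by
  have hx : 2 < ε⁻¹ := by rw [lt_inv_comm₀ (by norm_num) hε0]; linarith
  have hεx : ε * ε⁻¹ = 1 := mul_inv_cancel₀ hε0.ne'
  have hkR : (1 : ℝ) ≤ k := Nat.one_le_cast.2 hk
  have hx4 : 16 ≤ ε⁻¹ ^ 4 := by nlinarith [pow_le_pow_left₀ (by norm_num) hx.le 4]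
  refine ⟨⌈8 * ε⁻¹⌉₊, ⌈(k : ℝ) ^ 2 * ε⁻¹ ^ 4 / 3⌉₊, ?_, ?_, ?_⟩
  · nlinarith [Nat.le_ceil (8 * ε⁻¹)]
  · have h := mul_le_mul_of_nonneg_right (Nat.le_ceil ((k : ℝ) ^ 2 * ε⁻¹ ^ 4 / 3))
      (by positivity : (0 : ℝ) ≤ 49 / 64 * ε ^ 4)
    have : (k : ℝ) ^ 2 * ε⁻¹ ^ 4 / 3 * (49 / 64 * ε ^ 4) = 49 / 192 * k ^ 2 := by
      have h4 : ε⁻¹ ^ 4 * ε ^ 4 = 1 := by rw [← mul_pow, inv_mul_cancel₀ hε0.ne', one_pow]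
      linear_combination (49 / 192 * (k : ℝ) ^ 2) * h4
    nlinarith
  · set T := ⌈(k : ℝ) ^ 2 * ε⁻¹ ^ 4 / 3⌉₊
    have hE : (k : ℝ) ^ 2 * ε ^ (-5 : ℝ) = k ^ 2 * ε⁻¹ ^ 5 := by
      rw [Real.rpow_neg hε0.le, inv_pow, ← Real.rpow_natCast]; norm_num
    have hD : (⌈8 * ε⁻¹⌉₊ : ℝ) ≤ ε⁻¹ ^ 5 := by
      nlinarith [Nat.ceil_lt_add_one (by positivity : (0 : ℝ) ≤ 8 * ε⁻¹)]
    have hT : (5 * T : ℝ) ≤ k ^ 2 * ε⁻¹ ^ 5 := by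
      nlinarith [Nat.ceil_lt_add_one (by positivity : (0 : ℝ) ≤ (k : ℝ) ^ 2 * ε⁻¹ ^ 4 / 3)]
    calc (⌈8 * ε⁻¹⌉₊ : ℝ) ^ T * ε ^ ((k : ℝ) ^ 2 * ε ^ (-5 : ℝ))
        ≤ ε⁻¹ ^ ((5 * T : ℕ) : ℝ) * ε ^ ((k : ℝ) ^ 2 * ε⁻¹ ^ 5) := by
          rw [hE, Real.rpow_natCast, pow_mul]
          gcongr
      _ ≤ ε⁻¹ ^ ((k : ℝ) ^ 2 * ε⁻¹ ^ 5) * ε ^ ((k : ℝ) ^ 2 * ε⁻¹ ^ 5) := by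
          gcongr
          · linarith
          · push_cast; exact hT
      _ = 1 := by rw [← Real.mul_rpow (by positivity) hε0.le, inv_mul_cancel₀ hε0.ne',
          Real.one_rpow]

theorem weak_regular_cylinder_general (ε : ℝ) (hε0 : 0 < ε) (hε : ε < 1 / 2)
    (k : ℕ)
    (V : Type) [Fintype V] (hV : k ≤ Fintype.card V)
    (G : SimpleGraph V) :
    ∃ P : Fin k → Finset V,
      (∀ i j, i ≠ j → Disjoint (P i) (P j)) ∧
      (∀ i j, (P i).card = (P j).card) ∧
      (∀ i j, i < j → EpsRegular G ε (P i) (P j)) ∧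
      ∀ i, (1 / (2 * (k : ℝ))) * ε ^ (((k : ℝ) ^ 2) * ε ^ (-5 : ℝ)) * (Fintype.card V : ℝ)
        ≤ ((P i).card : ℝ) := by
  set β := 1 / (2 * (k : ℝ)) * ε ^ ((k : ℝ) ^ 2 * ε ^ (-5 : ℝ)) * Fintype.card V
  rcases le_or_gt β 1 with hβ | hβ
  · obtain ⟨P, hdisj, hcard⟩ := exists_pairwise_disjoint_card_eq (ι := Fin k) (V := V) (s := 1)
      (by simpa using hV)
    exact ⟨P, hdisj, fun i j ↦ by rw [hcard, hcard],
      fun i j _ ↦ epsRegular_of_card_le_one G hε0 (hcard i).le (hcard j).le,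
      fun i ↦ by rwa [hcard, Nat.cast_one]⟩
  have hk : 0 < k := Nat.pos_of_ne_zero fun h ↦ by norm_num [β, h] at hβ
  obtain ⟨D, T, hD, hT, hDT⟩ := exists_refinement_parameters hε0 hε hk
  have hD0 : 0 < D := Nat.pos_of_ne_zero fun h ↦ by simp [h] at hD; linarith
  set q := Fintype.card V / (k * D ^ T)
  have hβq : β ≤ q := by
    refine le_natCast_div_of_two_mul_le hβ.le (by positivity) ?_
    calc 2 * β * ↑(k * D ^ T) = D ^ T * ε ^ ((k : ℝ) ^ 2 * ε ^ (-5 : ℝ)) * Fintype.card V := by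
          simp only [β]; push_cast; field_simp
      _ ≤ Fintype.card V := mul_le_of_le_one_left (Nat.cast_nonneg _) hDT
  have hq : 0 < q := Nat.cast_pos.1 (by linarith : (0 : ℝ) < q)
  obtain ⟨W, hWdisj, hWcard⟩ := exists_pairwise_disjoint_card_eq (ι := Fin k) (V := V)
    (s := q * D ^ T) (by rw [Fintype.card_fin, mul_left_comm]; exact Nat.div_mul_le_self _ _)
  obtain ⟨P, hPW, ⟨s, hqs, hPs⟩, hreg⟩ := exists_epsRegularCylinder_subcylinder G hq hD T hWcard
    ((cylinderDefect_le G W).trans_lt (by simpa using hT))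
  exact ⟨P, fun i j hij ↦ (hWdisj i j hij).mono (hPW i) (hPW j), fun i j ↦ by rw [hPs, hPs],
    hreg, fun i ↦ hβq.trans (by rw [hPs]; exact_mod_cast hqs)⟩

/-- Lemma 5 (weak regularity, Duke–Lefmann–Rödl / Conlon–Fox): for `0 < ε < 1/2`,
any graph on at least `k` vertices has an `ε`-regular `k`-cylinder with parts of
equal size, each part of size at least `(1/(2k)) ε^(k² ε⁻⁵) |V|`. -/
theorem weak_regular_cylinder (ε : ℝ) (hε0 : 0 < ε) (hε : ε < 1 / 2)
    (k : ℕ) (hk : 0 < k)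
    (V : Type) [Fintype V] [DecidableEq V] (hV : k ≤ Fintype.card V)
    (G : SimpleGraph V) :
    ∃ P : Fin k → Finset V,
      (∀ i j, i ≠ j → Disjoint (P i) (P j)) ∧
      (∀ i j, (P i).card = (P j).card) ∧
      (∀ i j, i < j → EpsRegular G ε (P i) (P j)) ∧
      ∀ i, (1 / (2 * (k : ℝ))) * ε ^ (((k : ℝ) ^ 2) * ε ^ (-5 : ℝ)) * (Fintype.card V : ℝ)
        ≤ ((P i).card : ℝ) :=
  weak_regular_cylinder_general ε hε0 hε k V hV G
end

section
/- There exists an absolute constant C such that for every positive integer Δ and every bipartite graph G on n vertices with maximum degree at most Δ, every 2-edge-coloring of the complete graph on 2^{C·Δ}·n vertices contains a monochromatic copy of G; that is, the Ramsey number of G satisfies R(G) ≤ 2^{C·Δ}·n. -/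
/-!
Let `H` be the colour class containing at least half of all pairs of the `N` vertices, and call
a `Δ`-tuple of vertices of `A` bad if it has fewer than `n` common neighbours. By dependent
random choice, the common neighbourhood `A` of a suitable `Δ`-tuple `T` has `N ≤ 2·4^Δ·|A|` and
few bad tuples: a bad tuple lies in the common neighbourhood of `T` only if `T` lies in its small
common neighbourhood. Following Fox and Sudakov, one side `X` of the bipartite graph is embedded
into `A` one vertex at a time, each image chosen so that for every vertex `y` on the other side
the number of bad tuples through the images of the embedded neighbours of `y` is multiplied by
at most `2Δ²/|A|` with each new neighbour. Then these images have at least `n` common neighbours, for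
otherwise every tuple extending them would be bad, and the other side is embedded into these
common neighbourhoods by Hall's theorem.
-/

open Finset Fintype

lemma Finset.exists_injOn_forall_mem {ι α : Type*} [Nonempty α] [DecidableEq α] (s : Finset ι)
    (t : ι → Finset α) (h : ∀ i ∈ s, #s ≤ #(t i)) :
    ∃ g : ι → α, Set.InjOn g s ∧ ∀ i ∈ s, g i ∈ t i := by
  classical
  have hall (u : Finset s) : #u ≤ #(u.biUnion fun i ↦ t i) := by
    obtain rfl | ⟨i, hi⟩ := u.eq_empty_or_nonempty
    · simp
    calc #u ≤ #s := by simpa using card_le_univ u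
      _ ≤ #(t i) := h i i.2
      _ ≤ _ := card_le_card (subset_biUnion_of_mem (fun i : s ↦ t i) hi)
  obtain ⟨g, hg, hgt⟩ := (all_card_le_biUnion_card_iff_exists_injective _).1 hall
  refine ⟨fun i ↦ if hi : i ∈ s then g ⟨i, hi⟩ else Classical.arbitrary α,
    fun i hi j hj hij ↦ ?_, fun i hi ↦ by simpa [hi] using hgt ⟨i, hi⟩⟩
  exact congrArg Subtype.val (hg (by simpa [mem_coe.1 hi, mem_coe.1 hj] using hij))

lemma two_mul_le_and_mul_lt_pow {Δ n N a b : ℕ} (hΔ : 0 < Δ) (hn : 0 < n)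
    (hN : 2 ^ (8 * Δ) * n ≤ N) (ha : N ≤ 2 * 4 ^ Δ * a)
    (hb : N * b ≤ 2 * 4 ^ Δ * n ^ Δ * a) :
    2 * n ≤ a ∧ (2 * Δ ^ 2) ^ Δ * b < a ^ Δ := by
  set K := 8 * Δ ^ 2 * n with hKdef
  have hK : 2 * 4 ^ Δ * K ≤ N := by
    refine le_trans ?_ hN
    have h4 : Δ ^ 2 ≤ 4 ^ Δ := by
      rw [show 4 ^ Δ = (2 ^ Δ) ^ 2 by rw [← pow_mul, mul_comm, pow_mul]; norm_num]
      exact Nat.pow_le_pow_left Nat.lt_two_pow_self.le 2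
    have h16 : 16 ≤ 16 ^ Δ := Nat.le_self_pow hΔ.ne' 16
    calc 2 * 4 ^ Δ * K = 16 * Δ ^ 2 * 4 ^ Δ * n := by ring
      _ ≤ 16 ^ Δ * 4 ^ Δ * 4 ^ Δ * n := by gcongr
      _ = 2 ^ (8 * Δ) * n := by rw [← mul_pow, ← mul_pow, pow_mul]; norm_num
  have hKpos : 0 < K := by positivity
  have hKa : K ≤ a := Nat.le_of_mul_le_mul_left (hK.trans ha) (by positivity)
  have hKN : 2 * K < N := by
    have : 1 < 4 ^ Δ := Nat.one_lt_pow hΔ.ne' (by norm_num)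
    nlinarith
  refine ⟨le_trans (by nlinarith [Nat.one_le_pow 2 Δ hΔ, hKdef]) hKa, ?_⟩
  obtain ⟨d, rfl⟩ : ∃ d, Δ = d + 1 := ⟨Δ - 1, by omega⟩
  refine Nat.lt_of_mul_lt_mul_left (a := N) ?_
  calc N * ((2 * (d + 1) ^ 2) ^ (d + 1) * b) = (2 * (d + 1) ^ 2) ^ (d + 1) * (N * b) := by ring
    _ ≤ (2 * (d + 1) ^ 2) ^ (d + 1) * (2 * 4 ^ (d + 1) * n ^ (d + 1) * a) := by gcongr
    _ = 2 * K ^ (d + 1) * a := by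
        rw [show K = 2 * (d + 1) ^ 2 * 4 * n by ring, mul_pow (2 * (d + 1) ^ 2 * 4),
          mul_pow (2 * (d + 1) ^ 2) 4]
        ring
    _ = 2 * K * (K ^ d * a) := by ring
    _ ≤ 2 * K * (a ^ d * a) := by gcongr
    _ < N * a ^ (d + 1) := by
        rw [← pow_succ]; exact Nat.mul_lt_mul_of_pos_right hKN (pow_pos (hKpos.trans_le hKa) _)

namespace SimpleGraph

variable {V W : Type*} [Fintype W] {H : SimpleGraph W} [DecidableRel H.Adj]

lemma card_pow_succ_le_four_pow_mul_sum_degree_pow (hdense : card W ^ 2 ≤ 4 * ∑ w, H.degree w)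
    (Δ : ℕ) : card W ^ (Δ + 1) ≤ 4 ^ Δ * ∑ w, H.degree w ^ Δ := by
  obtain _ | d := Δ
  · simp
  obtain hW | hW := (card W).eq_zero_or_pos
  · simp [hW]
  refine Nat.le_of_mul_le_mul_left ?_ (pow_pos hW d)
  calc card W ^ d * card W ^ (d + 1 + 1) = (card W ^ 2) ^ (d + 1) := by ring
    _ ≤ (4 * ∑ w, H.degree w) ^ (d + 1) := Nat.pow_le_pow_left hdense _
    _ = 4 ^ (d + 1) * (∑ w, H.degree w) ^ (d + 1) := mul_pow ..
    _ ≤ 4 ^ (d + 1) * (card W ^ d * ∑ w, H.degree w ^ (d + 1)) := by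
        gcongr
        simpa using pow_sum_le_card_mul_sum_pow (s := univ) (fun w _ ↦ Nat.zero_le (H.degree w)) d
    _ = card W ^ d * (4 ^ (d + 1) * ∑ w, H.degree w ^ (d + 1)) := by ring

variable (H) in
def commonNeighborFinset (S : Finset W) : Finset W := {w | ∀ v ∈ S, H.Adj v w}

@[simp]
lemma mem_commonNeighborFinset {S : Finset W} {w : W} :
    w ∈ H.commonNeighborFinset S ↔ ∀ v ∈ S, H.Adj v w := by
  simp [commonNeighborFinset]

lemma commonNeighborFinset_anti {S T : Finset W} (h : S ⊆ T) :
    H.commonNeighborFinset T ⊆ H.commonNeighborFinset S := fun _ hw ↦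
  mem_commonNeighborFinset.2 fun v hv ↦ mem_commonNeighborFinset.1 hw v (h hv)

variable [DecidableEq W]

lemma mem_commonNeighborFinset_image {ι : Type*} [Fintype ι] {T : ι → W} {w : W} :
    w ∈ H.commonNeighborFinset (univ.image T) ↔ ∀ i, H.Adj (T i) w := by
  simp

-- Ordered tuples with repetitions allowed, so that counting them gives exact powers.
variable (H) in
def badTuples (A : Finset W) (Δ m : ℕ) : Finset (Fin Δ → W) :=
  {U ∈ piFinset fun _ ↦ A | #(H.commonNeighborFinset (univ.image U)) < m}

lemma mem_badTuples {A : Finset W} {Δ m : ℕ} {U : Fin Δ → W} :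
    U ∈ H.badTuples A Δ m ↔
      (∀ i, U i ∈ A) ∧ #(H.commonNeighborFinset (univ.image U)) < m := by
  simp [badTuples]

lemma card_filter_forall_mem (Δ : ℕ) (s : Finset W) :
    #{T : Fin Δ → W | ∀ i, T i ∈ s} = #s ^ Δ := by
  rw [← card_piFinset_const]
  congr 1
  ext T
  simp

lemma sum_card_commonNeighborFinset_image (Δ : ℕ) :
    ∑ T : Fin Δ → W, #(H.commonNeighborFinset (univ.image T)) = ∑ w, H.degree w ^ Δ := by
  have := sum_card_bipartiteAbove_eq_sum_card_bipartiteBelow (s := univ) (t := univ)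
    (r := fun (T : Fin Δ → W) w ↦ ∀ i, H.Adj (T i) w)
  convert this using 2 with T _ w
  · congr 1; ext w; simp [bipartiteAbove]
  · rw [bipartiteBelow, ← card_neighborFinset_eq_degree, ← card_filter_forall_mem]
    simp [adj_comm]

lemma sum_card_badTuples_le (Δ m : ℕ) :
    ∑ T : Fin Δ → W, #(H.badTuples (H.commonNeighborFinset (univ.image T)) Δ m)
      ≤ card W ^ Δ * m ^ Δ := by
  have := sum_card_bipartiteAbove_eq_sum_card_bipartiteBelow (s := univ) (t := univ)
    (r := fun (T U : Fin Δ → W) ↦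
      U ∈ H.badTuples (H.commonNeighborFinset (univ.image T)) Δ m)
  simp only [bipartiteAbove, filter_mem_eq_inter, univ_inter] at this
  rw [this, ← card_pi_const]
  refine sum_le_card_nsmul _ _ _ fun U _ ↦ ?_
  -- `U` is bad in the common neighbourhood of `T` iff `T` lies in that of `U`, which is small.
  by_cases hU : #(H.commonNeighborFinset (univ.image U)) < m
  · calc #(bipartiteBelow _ univ U)
        ≤ #{T : Fin Δ → W | ∀ j, T j ∈ H.commonNeighborFinset (univ.image U)} := by
          refine card_le_card fun T ↦ ?_
          simp only [bipartiteBelow, mem_filter, mem_univ, true_and, mem_badTuples,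
            mem_commonNeighborFinset_image]
          exact fun h j i ↦ (h.1 i j).symm
      _ ≤ m ^ Δ := by rw [card_filter_forall_mem]; exact Nat.pow_le_pow_left hU.le Δ
  · rw [bipartiteBelow,
      card_eq_zero.2 (filter_eq_empty_iff.2 fun T _ h ↦ hU (mem_badTuples.1 h).2)]
    exact Nat.zero_le _

lemma exists_large_few_badTuples [Nonempty W] {m : ℕ} (hm : 0 < m)
    (hdense : card W ^ 2 ≤ 4 * ∑ w, H.degree w) (Δ : ℕ) :
    ∃ A : Finset W, card W ≤ 2 * 4 ^ Δ * #A ∧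
      card W * #(H.badTuples A Δ m) ≤ 2 * 4 ^ Δ * m ^ Δ * #A := by
  -- `A` is the common neighbourhood of a `Δ`-tuple `T`, found by averaging `key` over `T`.
  have key : ∑ T : Fin Δ → W, (card W * m ^ Δ
        + card W * #(H.badTuples (H.commonNeighborFinset (univ.image T)) Δ m))
      ≤ ∑ T : Fin Δ → W, 2 * 4 ^ Δ * m ^ Δ * #(H.commonNeighborFinset (univ.image T)) :=
    calc _ = card W ^ Δ * (card W * m ^ Δ)
          + card W * ∑ T : Fin Δ → W,
            #(H.badTuples (H.commonNeighborFinset (univ.image T)) Δ m) := by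
          rw [sum_add_distrib, sum_const, card_univ, card_pi_const, smul_eq_mul, mul_sum]
      _ ≤ card W ^ Δ * (card W * m ^ Δ) + card W * (card W ^ Δ * m ^ Δ) := by
          gcongr; exact sum_card_badTuples_le Δ m
      _ = 2 * m ^ Δ * card W ^ (Δ + 1) := by ring
      _ ≤ 2 * m ^ Δ * (4 ^ Δ * ∑ w, H.degree w ^ Δ) := by
          gcongr; exact card_pow_succ_le_four_pow_mul_sum_degree_pow hdense Δ
      _ = _ := by rw [← mul_sum, sum_card_commonNeighborFinset_image]; ring
  obtain ⟨T, -, hT⟩ := exists_le_of_sum_le univ_nonempty key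
  refine ⟨H.commonNeighborFinset (univ.image T), ?_, (Nat.le_add_left _ _).trans hT⟩
  refine Nat.le_of_mul_le_mul_right ?_ (pow_pos hm Δ)
  calc card W * m ^ Δ ≤ _ := (Nat.le_add_right _ _).trans hT
    _ = _ := by ring

variable (H) in
def badThrough (A : Finset W) (Δ m : ℕ) (S : Finset W) : ℕ :=
  #{U ∈ H.badTuples A Δ m | S ⊆ univ.image U}

section BadThrough

variable {A : Finset W} {Δ m : ℕ}

lemma badThrough_le (S : Finset W) : H.badThrough A Δ m S ≤ #(H.badTuples A Δ m) :=
  card_filter_le _ _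

lemma badThrough_anti {S T : Finset W} (h : S ⊆ T) :
    H.badThrough A Δ m T ≤ H.badThrough A Δ m S :=
  card_le_card <| monotone_filter_right _ fun _ _ hT ↦ h.trans hT

lemma sum_badThrough_insert_le (S : Finset W) :
    ∑ v ∈ A \ S, H.badThrough A Δ m (insert v S) ≤ Δ * H.badThrough A Δ m S := by
  have := sum_card_bipartiteAbove_eq_sum_card_bipartiteBelow (s := A \ S)
    (t := {U ∈ H.badTuples A Δ m | S ⊆ univ.image U}) (r := fun v U ↦ v ∈ univ.image U)
  simp only [bipartiteAbove, filter_filter] at this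
  simp only [badThrough, insert_subset_iff, and_comm (a := _ ∈ univ.image _)]
  rw [this, mul_comm]
  refine sum_le_card_nsmul _ _ _ fun U _ ↦ ?_
  calc #(bipartiteBelow _ (A \ S) U) ≤ #(univ.image U) :=
        card_le_card fun v hv ↦ (mem_filter.1 hv).2
    _ ≤ Δ := card_image_le.trans (by simp)

lemma two_mul_card_heavy_le (hΔ : 0 < Δ) (S : Finset W) :
    2 * Δ * #{v ∈ A \ S |
      2 * Δ ^ 2 * H.badThrough A Δ m S < #A * H.badThrough A Δ m (insert v S)} ≤ #A := by
  set F := {v ∈ A \ S |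
    2 * Δ ^ 2 * H.badThrough A Δ m S < #A * H.badThrough A Δ m (insert v S)}
  obtain h0 | hpos := (H.badThrough A Δ m S).eq_zero_or_pos
  · suffices F = ∅ by simp [this]
    refine filter_eq_empty_iff.2 fun v _ h ↦ ?_
    have : H.badThrough A Δ m (insert v S) ≤ H.badThrough A Δ m S :=
      badThrough_anti (subset_insert v S)
    simp_all
  refine Nat.le_of_mul_le_mul_right ?_ (Nat.mul_pos hΔ hpos)
  calc 2 * Δ * #F * (Δ * H.badThrough A Δ m S)
      = #F * (2 * Δ ^ 2 * H.badThrough A Δ m S) := by ring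
    _ ≤ ∑ v ∈ F, #A * H.badThrough A Δ m (insert v S) :=
        card_nsmul_le_sum _ _ _ fun v hv ↦ (mem_filter.1 hv).2.le
    _ ≤ ∑ v ∈ A \ S, #A * H.badThrough A Δ m (insert v S) :=
        sum_le_sum_of_subset (filter_subset _ _)
    _ ≤ #A * (Δ * H.badThrough A Δ m S) := by
        rw [← mul_sum]; gcongr; exact sum_badThrough_insert_le S

lemma pow_le_badThrough {S : Finset W} (hSA : S ⊆ A) (hSΔ : #S ≤ Δ)
    (hS : #(H.commonNeighborFinset S) < m) : #A ^ (Δ - #S) ≤ H.badThrough A Δ m S := by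
  -- Every tuple listing `S` and then any `Δ - #S` vertices of `A` is bad and passes through `S`.
  set k := #S
  let s : Fin k → W := fun i ↦ S.equivFin.symm i
  have hΔk : Δ = k + (Δ - k) := by omega
  let extend : (Fin (Δ - k) → W) → Fin Δ → W := fun e i ↦ Fin.append s e (i.cast hΔk)
  have hS_sub : ∀ e, S ⊆ univ.image (extend e) := fun e v hv ↦ mem_image.2
    ⟨(Fin.castAdd _ (S.equivFin ⟨v, hv⟩)).cast hΔk.symm, mem_univ _, by simp [extend, s]⟩
  calc #A ^ (Δ - k) = #(piFinset fun _ : Fin (Δ - k) ↦ A) := (card_piFinset_const _ _).symm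
    _ ≤ H.badThrough A Δ m S := by
      refine card_le_card_of_injOn extend (fun e he ↦ ?_) (fun e _ e' _ h ↦ funext fun j ↦ ?_)
      · rw [mem_coe, mem_piFinset] at he
        refine mem_filter.2 ⟨mem_badTuples.2 ⟨fun i ↦ ?_, ?_⟩, hS_sub e⟩
        · simp only [extend]
          refine Fin.addCases (fun j ↦ ?_) (fun j ↦ ?_) (i.cast hΔk)
          · simpa [s] using hSA (S.equivFin.symm j).2
          · simpa using he j
        · exact (card_le_card (commonNeighborFinset_anti (hS_sub e))).trans_lt hS
      · simpa [extend] using congrFun h ((Fin.natAdd k j).cast hΔk.symm)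

-- Among the bad tuples, the proportion passing through `S` is at most `(2Δ² / #A) ^ #S`.
variable (H A Δ m) in
def FewBadThrough (S : Finset W) : Prop :=
  #A ^ #S * H.badThrough A Δ m S ≤ (2 * Δ ^ 2) ^ #S * #(H.badTuples A Δ m)

lemma fewBadThrough_empty : H.FewBadThrough A Δ m ∅ := by
  simpa [FewBadThrough] using badThrough_le ∅

lemma FewBadThrough.insert_of_le {S : Finset W} {v : W} (hS : H.FewBadThrough A Δ m S)
    (hv : v ∉ S)
    (hlight : #A * H.badThrough A Δ m (insert v S) ≤ 2 * Δ ^ 2 * H.badThrough A Δ m S) :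
    H.FewBadThrough A Δ m (insert v S) := by
  unfold FewBadThrough at *
  rw [card_insert_of_notMem hv, pow_succ, pow_succ]
  calc #A ^ #S * #A * H.badThrough A Δ m (insert v S)
      = #A ^ #S * (#A * H.badThrough A Δ m (insert v S)) := by ring
    _ ≤ #A ^ #S * (2 * Δ ^ 2 * H.badThrough A Δ m S) := by gcongr
    _ = 2 * Δ ^ 2 * (#A ^ #S * H.badThrough A Δ m S) := by ring
    _ ≤ 2 * Δ ^ 2 * ((2 * Δ ^ 2) ^ #S * #(H.badTuples A Δ m)) := by gcongr
    _ = _ := by ring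

lemma FewBadThrough.le_card_commonNeighborFinset {S : Finset W} (hS : H.FewBadThrough A Δ m S)
    (hΔ : 0 < Δ) (hSA : S ⊆ A) (hSΔ : #S ≤ Δ)
    (hbad : (2 * Δ ^ 2) ^ Δ * #(H.badTuples A Δ m) < #A ^ Δ) :
    m ≤ #(H.commonNeighborFinset S) := by
  by_contra! hlt
  refine (hbad.trans_le ?_).false
  calc #A ^ Δ = #A ^ #S * #A ^ (Δ - #S) := by rw [← pow_add, Nat.add_sub_cancel' hSΔ]
    _ ≤ #A ^ #S * H.badThrough A Δ m S := by gcongr; exact pow_le_badThrough hSA hSΔ hlt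
    _ ≤ (2 * Δ ^ 2) ^ #S * #(H.badTuples A Δ m) := hS
    _ ≤ (2 * Δ ^ 2) ^ Δ * #(H.badTuples A Δ m) := by
        gcongr
        nlinarith

lemma exists_light_vertex {ι : Type*} (hΔ : 0 < Δ) (J : Finset ι) (hJ : #J ≤ Δ)
    (S : ι → Finset W) (used : Finset W) (hused : 2 * #used < #A) :
    ∃ v ∈ A, v ∉ used ∧ ∀ y ∈ J, v ∉ S y →
      #A * H.badThrough A Δ m (insert v (S y)) ≤ 2 * Δ ^ 2 * H.badThrough A Δ m (S y) := by
  let heavy y := {v ∈ A \ S y |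
    2 * Δ ^ 2 * H.badThrough A Δ m (S y) < #A * H.badThrough A Δ m (insert v (S y))}
  have hheavy : 2 * ∑ y ∈ J, #(heavy y) ≤ #A := by
    refine Nat.le_of_mul_le_mul_left ?_ hΔ
    calc Δ * (2 * ∑ y ∈ J, #(heavy y)) = ∑ y ∈ J, 2 * Δ * #(heavy y) := by
          rw [mul_sum, mul_sum]; ring_nf
      _ ≤ ∑ _y ∈ J, #A := sum_le_sum fun y _ ↦ two_mul_card_heavy_le hΔ (S y)
      _ ≤ Δ * #A := by rw [sum_const, smul_eq_mul]; gcongr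
  have hcard : #(used ∪ J.biUnion heavy) < #A := by
    have : #(used ∪ J.biUnion heavy) ≤ #used + ∑ y ∈ J, #(heavy y) :=
      (card_union_le _ _).trans (by gcongr; exact card_biUnion_le)
    omega
  obtain ⟨v, hvA, hv⟩ := exists_mem_notMem_of_card_lt_card hcard
  simp only [mem_union, mem_biUnion, not_or, not_exists, not_and] at hv
  refine ⟨v, hvA, hv.1, fun y hy hvS ↦ ?_⟩
  have := hv.2 y hy
  simp_all [heavy]

lemma exists_injOn_fewBadThrough [Nonempty W] [Fintype V] [DecidableEq V] (hΔ : 0 < Δ)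
    (G : SimpleGraph V) [DecidableRel G.Adj] (hdeg : ∀ v, G.degree v ≤ Δ) (D : Finset V)
    (hD : 2 * #D ≤ #A) :
    ∃ f : V → W, Set.InjOn f D ∧ Set.MapsTo f D A ∧
      ∀ y, H.FewBadThrough A Δ m ((G.neighborFinset y ∩ D).image f) := by
  induction D using Finset.induction_on with
  | empty =>
    exact ⟨fun _ ↦ Classical.arbitrary W, by simp, by simp [Set.MapsTo],
      fun _ ↦ by simpa using fewBadThrough_empty⟩
  | insert x D hx ih =>
    rw [card_insert_of_notMem hx] at hD
    obtain ⟨f, hinj, hmaps, hfew⟩ := ih (by omega)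
    obtain ⟨v, hvA, hvD, hlight⟩ := exists_light_vertex (H := H) (A := A) (m := m) hΔ
      (G.neighborFinset x) (hdeg x) (fun y ↦ (G.neighborFinset y ∩ D).image f) (D.image f)
      (by have : #(D.image f) ≤ #D := card_image_le; omega)
    have hfD : ∀ s ⊆ D, s.image (Function.update f x v) = s.image f := fun s hs ↦
      image_congr fun y hy ↦ Function.update_of_ne (ne_of_mem_of_not_mem (hs hy) hx) ..
    refine ⟨Function.update f x v, ?_, ?_, fun y ↦ ?_⟩
    · rw [coe_insert, Set.injOn_insert (by simpa), Function.update_self,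
        ← coe_image, hfD D subset_rfl]
      exact ⟨hinj.congr fun y hy ↦ (Function.update_of_ne (ne_of_mem_of_not_mem hy hx) ..).symm,
        by simpa using hvD⟩
    · intro y hy
      obtain rfl | hy := mem_insert.1 hy
      · simpa using hvA
      · simpa [Function.update_of_ne (ne_of_mem_of_not_mem hy hx)] using hmaps hy
    by_cases hxy : x ∈ G.neighborFinset y
    · rw [inter_insert_of_mem hxy, image_insert, Function.update_self, hfD _ inter_subset_right]
      have hvS : v ∉ (G.neighborFinset y ∩ D).image f := fun h ↦
        hvD (image_subset_image inter_subset_right h)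
      exact (hfew y).insert_of_le hvS
        (hlight y (by simpa [adj_comm] using hxy) hvS)
    · rw [inter_insert_of_notMem hxy, hfD _ inter_subset_right]
      exact hfew y

theorem exists_injective_hom_of_fewBadTuples [Nonempty W] [Fintype V] (hΔ : 0 < Δ)
    (G : SimpleGraph V) [DecidableRel G.Adj] (hG : G.IsBipartite) (hdeg : ∀ v, G.degree v ≤ Δ)
    (hA : 2 * card V ≤ #A)
    (hbad : (2 * Δ ^ 2) ^ Δ * #(H.badTuples A Δ (card V)) < #A ^ Δ) :
    ∃ f : V → W, Function.Injective f ∧ ∀ u v, G.Adj u v → H.Adj (f u) (f v) := by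
  classical
  obtain ⟨s, t, hst⟩ := hG.exists_isBipartiteWith
  set X : Finset V := {v | v ∈ s}
  have hside : ∀ ⦃u v⦄, G.Adj u v → (u ∈ X ↔ v ∉ X) := fun u v huv ↦ by
    rcases hst.mem_of_adj huv with ⟨hu, hv⟩ | ⟨hu, hv⟩ <;>
      simp [X, hu, hv, Set.disjoint_right.1 hst.disjoint]
  obtain ⟨f, hinj, hmaps, hfew⟩ :=
    exists_injOn_fewBadThrough (H := H) (A := A) (m := card V) hΔ G hdeg X
      (by have := card_le_univ X; omega)
  set S := fun y ↦ (G.neighborFinset y ∩ X).image f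
  have hrich (y : V) : card V ≤ #(H.commonNeighborFinset (S y)) :=
    (hfew y).le_card_commonNeighborFinset hΔ
      (by simpa [S, image_subset_iff] using fun u _ hu ↦ hmaps hu)
      (card_image_le.trans ((card_le_card inter_subset_left).trans (hdeg y))) hbad
  obtain ⟨g, hginj, hg⟩ := Xᶜ.exists_injOn_forall_mem
    (fun y ↦ H.commonNeighborFinset (S y) \ X.image f) fun y _ ↦ by
      have := le_card_sdiff (X.image f) (H.commonNeighborFinset (S y))
      rw [card_compl, card_image_of_injOn hinj] at *
      have := hrich y
      omega
  simp only [mem_compl, mem_sdiff] at hg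
  have hcross ⦃u v⦄ (huv : G.Adj u v) (hu : u ∈ X) (hv : v ∉ X) : H.Adj (f u) (g v) :=
    mem_commonNeighborFinset.1 (hg v hv).1 _
      (mem_image_of_mem f (mem_inter.2 ⟨(mem_neighborFinset ..).2 huv.symm, hu⟩))
  refine ⟨X.piecewise f g, ?_, fun u v huv ↦ ?_⟩
  · rw [← piecewise_coe, Set.injective_piecewise_iff, ← coe_compl]
    exact ⟨hinj, hginj, fun x hx y hy hxy ↦ (hg y hy).2 (hxy ▸ mem_image_of_mem f hx)⟩
  by_cases hu : u ∈ X
  · have hv := (hside huv).1 hu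
    simpa [hu, hv] using hcross huv hu hv
  · have hv : v ∈ X := by by_contra hv; exact hu ((hside huv).2 hv)
    simpa [hu, hv] using (hcross huv.symm hv hu).symm

end BadThrough

lemma le_two_mul_sum_degree_or_compl (R : SimpleGraph W) [DecidableRel R.Adj] :
    card W * (card W - 1) ≤ 2 * ∑ w, R.degree w ∨
      card W * (card W - 1) ≤ 2 * ∑ w, Rᶜ.degree w := by
  have h (w : W) : R.degree w + Rᶜ.degree w = card W - 1 := by
    have := R.degree_lt_card_verts w
    rw [degree_compl]
    omega
  have : ∑ w, R.degree w + ∑ w, Rᶜ.degree w = card W * (card W - 1) := by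
    simp only [← sum_add_distrib, h, sum_const, card_univ, smul_eq_mul]
  omega

theorem exists_injective_hom_of_two_pow_mul_le {Δ : ℕ} (hΔ : 0 < Δ) [Fintype V]
    (G : SimpleGraph V) [DecidableRel G.Adj] (hG : G.IsBipartite) (hdeg : ∀ v, G.degree v ≤ Δ)
    (hN : 2 ^ (8 * Δ) * card V ≤ card W)
    (hdense : card W * (card W - 1) ≤ 2 * ∑ w, H.degree w) :
    ∃ f : V → W, Function.Injective f ∧ ∀ u v, G.Adj u v → H.Adj (f u) (f v) := by
  cases isEmpty_or_nonempty V
  · exact ⟨isEmptyElim, Function.injective_of_subsingleton _, fun u ↦ isEmptyElim u⟩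
  have hV : 0 < card V := card_pos
  have hW : 2 ≤ card W :=
    (Nat.le_self_pow (by omega) 2).trans ((Nat.le_mul_of_pos_right _ hV).trans hN)
  have : Nonempty W := card_pos_iff.1 (by omega)
  have hsq : card W ^ 2 ≤ 4 * ∑ w, H.degree w :=
    calc card W ^ 2 ≤ card W * (2 * (card W - 1)) := by rw [sq]; gcongr; omega
      _ = 2 * (card W * (card W - 1)) := by ring
      _ ≤ 4 * ∑ w, H.degree w := by linarith
  obtain ⟨A, hA, hbad⟩ := H.exists_large_few_badTuples hV hsq Δ
  obtain ⟨hAV, hAbad⟩ := two_mul_le_and_mul_lt_pow hΔ hV hN hA hbad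
  exact exists_injective_hom_of_fewBadTuples hΔ G hG hdeg hAV hAbad

end SimpleGraph

/-- Ramsey numbers of bounded degree bipartite graphs (Conlon, Fox–Sudakov):
there is an absolute constant `C` such that every bipartite graph `G` on `n`
vertices with maximum degree at most `Δ` satisfies `R(G) ≤ 2^(C Δ) n`. -/
theorem ramsey_bounded_degree_bipartite :
    ∃ C : ℝ, ∀ Δ : ℕ, 0 < Δ → ∀ (n : ℕ) (G : SimpleGraph (Fin n)),
      G.Colorable 2 →
      (∀ v : Fin n, (G.neighborSet v).ncard ≤ Δ) →
      ∀ (W : Type) [Fintype W],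
        (2 : ℝ) ^ (C * Δ) * n ≤ (Fintype.card W : ℝ) →
        ∀ R : SimpleGraph W,
          (∃ f : Fin n → W, Function.Injective f ∧
            ∀ u v, G.Adj u v → R.Adj (f u) (f v)) ∨
          (∃ f : Fin n → W, Function.Injective f ∧
            ∀ u v, G.Adj u v → Rᶜ.Adj (f u) (f v)) := by
  refine ⟨8, fun Δ hΔ n G hG hdeg W _ hW R ↦ ?_⟩
  classical
  have hN : 2 ^ (8 * Δ) * Fintype.card (Fin n) ≤ Fintype.card W := by
    rw [show (8 : ℝ) * Δ = (8 * Δ : ℕ) by push_cast; ring, Real.rpow_natCast] at hW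
    rw [Fintype.card_fin]
    exact_mod_cast hW
  have hdeg' (v : Fin n) : G.degree v ≤ Δ := by
    simpa [Set.ncard_eq_toFinset_card', ← SimpleGraph.card_neighborSet_eq_degree] using hdeg v
  obtain hR | hR := R.le_two_mul_sum_degree_or_compl
  · exact .inl (R.exists_injective_hom_of_two_pow_mul_le hΔ G hG hdeg' hN hR)
  · exact .inr (Rᶜ.exists_injective_hom_of_two_pow_mul_le hΔ G hG hdeg' hN hR)
end
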